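/- arXiv:2604.04148 — 9 statements merged into one kernel-verified Lean document; each statement's English description precedes it below -/
import Mathlib

section
/- The function F₁ is convex on all of ℝ; equivalently, its derivative F₁' is monotone nondecreasing on ℝ. -/
open Real Filter

noncomputable def F1 (δ₀ s : ℝ) : ℝ :=
  if s = 0 then 0
  else if |s| < δ₀ then -(1/2) * s^2 * Real.log (s^2)
  else -(1/2) * s^2 * (Real.log (δ₀^2) + 3) + 2*δ₀*|s| - δ₀^2/2

noncomputable def F1' (δ₀ s : ℝ) : ℝ :=
  if s = 0 then 0
  else if |s| < δ₀ then -(Real.log (s^2) + 1) * s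
  else -(Real.log (δ₀^2) + 3) * s + 2*δ₀*(Real.sign s)

noncomputable def F2 (δ₀ s : ℝ) : ℝ :=
  if |s| < δ₀ then 0
  else (1/2) * s^2 * Real.log (s^2/δ₀^2) + 2*δ₀*|s| - (3/2)*s^2 - δ₀^2/2

noncomputable def F2' (δ₀ s : ℝ) : ℝ :=
  if |s| < δ₀ then 0
  else s * Real.log (s^2/δ₀^2) - 2*s + 2*δ₀*(Real.sign s)

/-! On `[-δ₀, δ₀]` we have `F1 s = s * negMulLog s`, whose derivative `2 * negMulLog s - s` has
derivative `-2 log s - 3`, positive for `0 < s < exp (-3/2)`. Beyond `±δ₀`, `F1` is continued by its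
second-order Taylor polynomial at `±δ₀` (and `F1'` by its first-order one), so `F1` is differentiable
with derivative `F1'`, and `F1'` is odd and increasing. -/

open Set

namespace Real

lemma hasDerivAt_mul_negMulLog (x : ℝ) :
    HasDerivAt (fun s ↦ s * negMulLog s) (2 * negMulLog x - x) x := by
  refine hasDerivAt_of_hasDerivAt_of_ne' (fun y hy ↦ ?_) (by fun_prop)
    (by fun_prop : ContinuousAt (fun s ↦ 2 * negMulLog s - s) 0) x
  refine ((hasDerivAt_id' y).mul (hasDerivAt_negMulLog hy)).congr_deriv ?_
  simp only [negMulLog]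
  ring

lemma log_add_three_halves_neg {s : ℝ} (hs : 0 < s) (hs' : s < exp (-(3 / 2))) :
    log s + 3 / 2 < 0 := by
  linarith [(log_lt_iff_lt_exp hs).2 hs']

lemma monotoneOn_two_mul_negMulLog_sub :
    MonotoneOn (fun s ↦ 2 * negMulLog s - s) (Icc 0 (exp (-(3 / 2)))) := by
  refine monotoneOn_of_hasDerivWithinAt_nonneg (convex_Icc _ _) (by fun_prop)
    (fun x hx ↦ ?_) (f' := fun x ↦ -2 * log x - 3) fun x hx ↦ ?_
  · rw [interior_Icc] at hx
    refine (((hasDerivAt_negMulLog hx.1.ne').const_mul 2).sub (hasDerivAt_id' x)).congr_deriv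
      (by ring) |>.hasDerivWithinAt
  · rw [interior_Icc] at hx
    linarith [log_add_three_halves_neg hx.1 hx.2]

end Real

lemma hasDerivAt_quadratic (a b c x : ℝ) :
    HasDerivAt (fun s ↦ a * s ^ 2 + b * s + c) (2 * a * x + b) x :=
  ((((hasDerivAt_pow 2 x).const_mul a).add ((hasDerivAt_id' x).const_mul b)).add_const c)
    |>.congr_deriv (by ring)

lemma monotone_of_odd_of_monotoneOn_Ici {α β : Type*} [AddCommGroup α] [LinearOrder α]
    [IsOrderedAddMonoid α] [AddCommGroup β] [PartialOrder β] [IsOrderedAddMonoid β] {f : α → β}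
    (hodd : ∀ x, f (-x) = -f x) (hf : MonotoneOn f (Ici 0)) : Monotone f := by
  refine MonotoneOn.Iic_union_Ici (fun a ha b hb hab ↦ ?_) hf
  have := hf (neg_nonneg.2 hb) (neg_nonneg.2 ha) (neg_le_neg hab)
  rwa [hodd, hodd, neg_le_neg_iff] at this

section F1

variable {δ₀ s : ℝ}

lemma F1_neg (δ₀ s : ℝ) : F1 δ₀ (-s) = F1 δ₀ s := by
  simp only [F1, neg_eq_zero, abs_neg, neg_sq]

lemma F1'_neg (δ₀ s : ℝ) : F1' δ₀ (-s) = -F1' δ₀ s := by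
  simp only [F1', neg_eq_zero, abs_neg, neg_sq, Real.sign_neg]
  split_ifs <;> ring

lemma F1_eq_mul_negMulLog (hs : |s| ≤ δ₀) : F1 δ₀ s = s * negMulLog s := by
  rcases eq_or_ne s 0 with rfl | h0
  · simp [F1]
  rw [F1, if_neg h0]
  split_ifs with h
  · simp only [negMulLog, log_pow]
    push_cast
    ring
  · rw [← le_antisymm hs (not_lt.1 h)]
    simp only [negMulLog, sq_abs, log_pow]
    push_cast
    linear_combination 2 * sq_abs s

lemma F1'_eq_two_mul_negMulLog_sub (hs : s ∈ Icc 0 δ₀) : F1' δ₀ s = 2 * negMulLog s - s := by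
  rcases hs.1.eq_or_lt with rfl | hpos
  · simp [F1']
  rw [F1', if_neg hpos.ne']
  split_ifs with h
  · simp only [negMulLog, log_pow]
    push_cast
    ring
  · rw [← le_antisymm hs.2 (by rwa [not_lt, abs_of_pos hpos] at h), sign_of_pos hpos]
    simp only [negMulLog, log_pow]
    push_cast
    ring

lemma F1_eq_of_le (hδ₀ : 0 < δ₀) (hs : δ₀ ≤ s) :
    F1 δ₀ s = -(1/2) * s^2 * (log (δ₀^2) + 3) + 2*δ₀*s - δ₀^2/2 := by
  have hpos := hδ₀.trans_le hs
  rw [F1, if_neg hpos.ne', if_neg (by rwa [not_lt, abs_of_pos hpos]), abs_of_pos hpos]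

lemma F1'_eq_of_le (hδ₀ : 0 < δ₀) (hs : δ₀ ≤ s) :
    F1' δ₀ s = -(log (δ₀^2) + 3) * s + 2*δ₀ := by
  have hpos := hδ₀.trans_le hs
  rw [F1', if_neg hpos.ne', if_neg (by rwa [not_lt, abs_of_pos hpos]), sign_of_pos hpos, mul_one]

lemma hasDerivAt_F1 (hδ₀ : 0 < δ₀) (x : ℝ) : HasDerivAt (F1 δ₀) (F1' δ₀ x) x := by
  wlog hx : 0 ≤ x generalizing x
  · simpa [Function.comp_def, F1_neg, F1'_neg] using
      (this (-x) (by linarith)).comp x (hasDerivAt_neg' x)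
  have hquad (x : ℝ) (hx : δ₀ ≤ x) :
      HasDerivAt (fun s ↦ -(log (δ₀^2) + 3) / 2 * s ^ 2 + 2 * δ₀ * s + -(δ₀^2/2)) (F1' δ₀ x) x :=
    (hasDerivAt_quadratic _ _ _ x).congr_deriv (by rw [F1'_eq_of_le hδ₀ hx]; ring)
  rcases lt_trichotomy x δ₀ with hlt | heq | hgt
  · rw [F1'_eq_two_mul_negMulLog_sub ⟨hx, hlt.le⟩]
    refine (hasDerivAt_mul_negMulLog x).congr_of_eventuallyEq ?_
    filter_upwards [Ioo_mem_nhds (show -δ₀ < x by linarith) hlt] with s hs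
    exact F1_eq_mul_negMulLog (abs_le.2 ⟨hs.1.le, hs.2.le⟩)
  · subst heq
    have hleft : HasDerivWithinAt (F1 x) (F1' x x) (Icc 0 x) x :=
      ((hasDerivAt_mul_negMulLog x).congr_deriv
        (F1'_eq_two_mul_negMulLog_sub ⟨hx, le_rfl⟩).symm).hasDerivWithinAt.congr
        (fun s hs ↦ F1_eq_mul_negMulLog (by rw [abs_of_nonneg hs.1]; exact hs.2))
        (F1_eq_mul_negMulLog (abs_of_nonneg hx).le)
    have hright : HasDerivWithinAt (F1 x) (F1' x x) (Ici x) x :=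
      (hquad x le_rfl).hasDerivWithinAt.congr
        (fun s hs ↦ by rw [F1_eq_of_le hδ₀ hs]; ring) (by rw [F1_eq_of_le hδ₀ le_rfl]; ring)
    exact (hleft.union hright).hasDerivAt (by rw [Icc_union_Ici_eq_Ici hx]; exact Ici_mem_nhds hδ₀)
  · refine (hquad x hgt.le).congr_of_eventuallyEq ?_
    filter_upwards [Ioi_mem_nhds hgt] with s hs
    rw [F1_eq_of_le hδ₀ hs.le]
    ring

lemma monotoneOn_F1'_Ici (hδ₀ : 0 < δ₀) (hδ₀' : δ₀ < exp (-(3/2))) :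
    MonotoneOn (F1' δ₀) (Ici 0) := by
  have hslope : 0 ≤ -(log (δ₀^2) + 3) := by
    rw [log_pow]
    push_cast
    linarith [log_add_three_halves_neg hδ₀ hδ₀']
  rw [← Icc_union_Ici_eq_Ici hδ₀.le]
  refine MonotoneOn.union_right ?_ ?_ (isGreatest_Icc hδ₀.le) isLeast_Ici
  · exact (monotoneOn_two_mul_negMulLog_sub.mono (Icc_subset_Icc_right hδ₀'.le)).congr
      fun s hs ↦ (F1'_eq_two_mul_negMulLog_sub hs).symm
  · intro a ha b hb hab
    rw [F1'_eq_of_le hδ₀ ha, F1'_eq_of_le hδ₀ hb]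
    gcongr

end F1

theorem stmt_5 (δ₀ : ℝ) (hδ₀ : 0 < δ₀) (hδ₀' : δ₀ < Real.exp (-(3/2))) :
    ConvexOn ℝ Set.univ (F1 δ₀) ∧ Monotone (F1' δ₀) := by
  have hmono : Monotone (F1' δ₀) :=
    monotone_of_odd_of_monotoneOn_Ici (F1'_neg δ₀) (monotoneOn_F1'_Ici hδ₀ hδ₀')
  have hderiv : deriv (F1 δ₀) = F1' δ₀ := funext fun x ↦ (hasDerivAt_F1 hδ₀ x).deriv
  exact ⟨Monotone.convexOn_univ_of_deriv (fun x ↦ (hasDerivAt_F1 hδ₀ x).differentiableAt)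
    (hderiv ▸ hmono), hmono⟩
end

section
/- For every s > 0 one has the strict inequalities 1 < F₁'(s)·s / F₁(s) < 2. -/
open Real Filter

theorem stmt_8 (δ₀ : ℝ) (hδ₀ : 0 < δ₀) (hδ₀' : δ₀ < Real.exp (-(3/2))) :
    ∀ s : ℝ, 0 < s →
      1 < F1' δ₀ s * s / F1 δ₀ s ∧ F1' δ₀ s * s / F1 δ₀ s < 2 := by
  intro s hs
  have hsne : s ≠ 0 := ne_of_gt hs
  have habs : |s| = s := abs_of_pos hs
  have hlogδ : Real.log δ₀ < -(3/2) := by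
    have := Real.log_lt_log hδ₀ hδ₀'
    rwa [Real.log_exp] at this
  have hA : Real.log (δ₀^2) < -3 := by
    rw [Real.log_pow]
    push_cast
    nlinarith
  by_cases hcase : |s| < δ₀
  · have hsδ : s < δ₀ := habs ▸ hcase
    have hL : Real.log (s^2) < -3 := by
      have hle : Real.log (s^2) ≤ Real.log (δ₀^2) := by
        apply Real.log_le_log (by positivity)
        nlinarith
      linarith
    simp only [F1, F1', if_neg hsne, if_pos hcase]
    set L := Real.log (s^2) with hLdef
    have hs2 : (0:ℝ) < s^2 := by positivity
    have hF1pos : 0 < -(1/2) * s^2 * L := by nlinarith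
    constructor
    · rw [lt_div_iff₀ hF1pos]; nlinarith
    · rw [div_lt_iff₀ hF1pos]; nlinarith
  · push_neg at hcase
    have hsδ : δ₀ ≤ s := by rwa [habs] at hcase
    have hsign : Real.sign s = 1 := Real.sign_of_pos hs
    simp only [F1, F1', if_neg hsne, habs, hsign]
    rw [if_neg (not_lt.mpr hsδ), if_neg (not_lt.mpr hsδ)]
    set A := Real.log (δ₀^2)
    have hF1pos : 0 < -(1/2)*s^2*(A+3) + 2*δ₀*s - δ₀^2/2 := by nlinarith
    constructor
    · rw [lt_div_iff₀ hF1pos]; nlinarith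
    · rw [div_lt_iff₀ hF1pos]; nlinarith
end

section
/- There exists a real number l with 1 < l < 2 such that for every s ∈ ℝ one has l·F₁(s) ≤ F₁'(s)·s ≤ 2·F₁(s). -/
open Real Filter

theorem stmt_9 (δ₀ : ℝ) (hδ₀ : 0 < δ₀) (hδ₀' : δ₀ < Real.exp (-(3/2))) :
    ∃ l : ℝ, 1 < l ∧ l < 2 ∧
      ∀ s : ℝ, l * F1 δ₀ s ≤ F1' δ₀ s * s ∧ F1' δ₀ s * s ≤ 2 * F1 δ₀ s := by
  have hlog : Real.log (δ₀^2) < -3 := by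
    have h1 : Real.log δ₀ < -(3/2) := by
      have := Real.log_lt_log hδ₀ hδ₀'
      rwa [Real.log_exp] at this
    have h2 : Real.log (δ₀^2) = 2 * Real.log δ₀ := by
      rw [sq, Real.log_mul (ne_of_gt hδ₀) (ne_of_gt hδ₀)]; ring
    rw [h2]; linarith
  set A : ℝ := -(Real.log (δ₀^2) + 3) with hA
  have hApos : 0 < A := by rw [hA]; linarith
  set ε : ℝ := min (1/3) (A/8) with hε
  have hεpos : 0 < ε := lt_min (by norm_num) (by linarith)
  have hεle : ε ≤ 1/3 := min_le_left _ _
  have hεleA : ε ≤ A/8 := min_le_right _ _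
  refine ⟨1+ε, by linarith, by linarith, fun s => ?_⟩
  rcases eq_or_ne s 0 with rfl | hs
  · simp [F1, F1']
  by_cases hcase : |s| < δ₀
  · -- inner region
    have hs2 : (0:ℝ) < s^2 := by positivity
    have hs2lt : s^2 < δ₀^2 := by nlinarith [abs_nonneg s, sq_abs s, abs_pos.mpr hs]
    have hlogs : Real.log (s^2) < Real.log (δ₀^2) := Real.log_lt_log hs2 hs2lt
    rw [F1, F1', if_neg hs, if_neg hs, if_pos hcase, if_pos hcase]
    constructor
    · have hkey : (1:ℝ) ≤ ((1-ε)/2) * (-Real.log (s^2)) := by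
        nlinarith [hlogs, hεle, hApos, hεpos]
      nlinarith [mul_le_mul_of_nonneg_left hkey hs2.le]
    · nlinarith [hs2]
  · -- outer region
    push_neg at hcase
    have habs : δ₀ ≤ |s| := hcase
    have hsign : Real.sign s * s = |s| := by
      rcases hs.lt_or_gt with h | h
      · rw [Real.sign_of_neg h, abs_of_neg h]; ring
      · rw [Real.sign_of_pos h, abs_of_pos h]; ring
    rw [F1, F1', if_neg hs, if_neg hs, if_neg (not_lt.mpr habs), if_neg (not_lt.mpr habs)]
    have hsq : |s| ^ 2 = s ^ 2 := sq_abs s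
    have hsq' : |s| * |s| = s ^ 2 := by rw [← sq_abs s]; ring
    have he : (-(Real.log (δ₀^2) + 3) * s + 2*δ₀*(Real.sign s)) * s
        = A * s^2 + 2*δ₀*|s| := by
      simp only [hA]; linear_combination (2*δ₀) * hsign
    have hf : -(1/2) * s^2 * (Real.log (δ₀^2) + 3) + 2*δ₀*|s| - δ₀^2/2
        = A/2 * s^2 + 2*δ₀*|s| - δ₀^2/2 := by
      simp only [hA]; ring
    rw [he, hf]
    have h2 : A * (δ₀ * |s|) ≤ A * s ^ 2 := by
      rw [← hsq']
      exact mul_le_mul_of_nonneg_left (mul_le_mul_of_nonneg_right habs (abs_nonneg s)) hApos.le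
    have h3 : 2*δ₀*ε*|s| ≤ A*δ₀/4*|s| := by
      have h1 : 2*δ₀*ε ≤ A*δ₀/4 := by nlinarith
      exact mul_le_mul_of_nonneg_right h1 (abs_nonneg s)
    have h4 : ε*(A*s^2) ≤ (1/2)*(A*s^2) :=
      mul_le_mul_of_nonneg_right (by linarith) (by positivity)
    constructor
    · nlinarith [hsq', h2, h3, h4, hδ₀, sq_nonneg δ₀, mul_nonneg hεpos.le (sq_nonneg δ₀)]
    · nlinarith [mul_le_mul_of_nonneg_left habs hδ₀.le]
end

section
/- The function F₁ satisfies the Δ₂-condition: there exists k > 0 such that F₁(2t) ≤ k·F₁(t) for all t ∈ ℝ. -/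
open Real Filter

theorem stmt_10 (δ₀ : ℝ) (hδ₀ : 0 < δ₀) (hδ₀' : δ₀ < Real.exp (-(3/2))) :
    ∃ k : ℝ, 0 < k ∧ ∀ t : ℝ, F1 δ₀ (2 * t) ≤ k * F1 δ₀ t := by
  have hlog : Real.log δ₀ < -(3/2) := (Real.log_lt_iff_lt_exp hδ₀).2 hδ₀'
  have hA : Real.log (δ₀^2) < -3 := by
    rw [Real.log_pow]; push_cast; linarith
  refine ⟨16, by norm_num, fun t => ?_⟩
  rcases eq_or_ne t 0 with rfl | ht
  · simp [F1]
  have ht2 : (0:ℝ) < t^2 := by positivity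
  have h2t : (2:ℝ) * t ≠ 0 := by simpa using ht
  have habs : |2 * t| = 2 * |t| := by rw [abs_mul]; simp
  by_cases h2 : |2 * t| < δ₀
  · have ht1 : |t| < δ₀ := by rw [habs] at h2; linarith [abs_nonneg t]
    unfold F1
    rw [if_neg h2t, if_pos h2, if_neg ht, if_pos ht1]
    have hlt : Real.log (t^2) < Real.log (δ₀^2) :=
      Real.log_lt_log ht2 (by nlinarith [abs_nonneg t, sq_abs t])
    have h4 : (0:ℝ) ≤ Real.log 4 := Real.log_nonneg (by norm_num)
    have hexp : ((2*t)^2) = 4 * t^2 := by ring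
    rw [hexp, Real.log_mul (by norm_num) (ne_of_gt ht2)]
    nlinarith [mul_nonneg ht2.le h4, mul_pos ht2 (by linarith : (0:ℝ) < -(Real.log (t^2)))]
  · push_neg at h2
    rw [habs] at h2
    by_cases ht1 : |t| < δ₀
    · unfold F1
      rw [if_neg h2t, if_neg (by rw [habs]; linarith), if_neg ht, if_pos ht1]
      rw [habs]
      have hlt : Real.log (t^2) < Real.log (δ₀^2) :=
        Real.log_lt_log ht2 (by nlinarith [abs_nonneg t, sq_abs t])
      have htl : δ₀^2/4 ≤ t^2 := by nlinarith [sq_abs t]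
      nlinarith [mul_pos ht2 (by linarith : (0:ℝ) < -(Real.log (t^2))),
        mul_lt_mul_of_pos_left hlt ht2, sq_abs t, abs_nonneg t, sq_nonneg (|t| - δ₀)]
    · push_neg at ht1
      unfold F1
      rw [if_neg h2t, if_neg (by rw [habs]; linarith), if_neg ht, if_neg (not_lt.2 ht1)]
      rw [habs]
      have hd : δ₀^2 ≤ t^2 := by nlinarith [sq_abs t]
      have hdd : δ₀^2 ≤ δ₀ * |t| := by nlinarith
      nlinarith [mul_nonneg (by nlinarith [sq_abs t] : (0:ℝ) ≤ t^2 - δ₀^2)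
        (by linarith : (0:ℝ) ≤ -(Real.log (δ₀^2) + 3)), mul_pos hδ₀ (lt_of_lt_of_le hδ₀ ht1)]
end

section
/- The conjugate N-function of F₁, defined for s ≥ 0 by F̃₁(s) = sup{ s·t − F₁(t) : t ≥ 0 } (a finite real number, since F₁ grows quadratically), satisfies the Δ₂-condition: there exists k > 0 such that F̃₁(2s) ≤ k·F̃₁(s) for all s ≥ 0. -/
open Real Filter

noncomputable def F1conj (δ₀ s : ℝ) : ℝ :=
  sSup ((fun t => s * t - F1 δ₀ t) '' Set.Ici (0:ℝ))

lemma aux_log_le_two_sqrt (m : ℝ) (hm : 0 < m) :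
    Real.log m ≤ 2 * Real.sqrt m - 2 := by
  have h1 : Real.log (Real.sqrt m) ≤ Real.sqrt m - 1 :=
    Real.log_le_sub_one_of_pos (Real.sqrt_pos.mpr hm)
  have h2 : Real.log (Real.sqrt m) = Real.log m / 2 := Real.log_sqrt hm.le
  linarith

lemma aux_F1_zero (δ₀ : ℝ) : F1 δ₀ 0 = 0 := by simp [F1]

lemma aux_F1_small (δ₀ t : ℝ) (ht : 0 < t) (ht' : t < δ₀) :
    F1 δ₀ t = -(1/2) * t^2 * Real.log (t^2) := by
  rw [F1, if_neg ht.ne', if_pos (by rwa [abs_of_pos ht])]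

lemma aux_F1_big (δ₀ t : ℝ) (hδ : 0 < δ₀) (ht : δ₀ ≤ t) :
    F1 δ₀ t = (-(Real.log δ₀) - 3/2) * t^2 + 2*δ₀*t - δ₀^2/2 := by
  have htpos : 0 < t := lt_of_lt_of_le hδ ht
  rw [F1, if_neg htpos.ne', if_neg (by rw [abs_of_pos htpos]; exact not_lt.mpr ht),
    abs_of_pos htpos]
  have : Real.log (δ₀^2) = 2 * Real.log δ₀ := by
    rw [Real.log_pow]; push_cast; ring
  rw [this]; ring

set_option maxHeartbeats 2000000 in
theorem stmt_11 (δ₀ : ℝ) (hδ₀ : 0 < δ₀) (hδ₀' : δ₀ < Real.exp (-(3/2))) :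
    ∃ k : ℝ, 0 < k ∧ ∀ s : ℝ, 0 ≤ s → F1conj δ₀ (2 * s) ≤ k * F1conj δ₀ s := by
  obtain ⟨L, hLdef⟩ : ∃ L : ℝ, Real.log δ₀ = -L := ⟨-Real.log δ₀, by ring⟩
  have hL32 : 3/2 < L := by
    have h := Real.log_lt_log hδ₀ hδ₀'
    rw [Real.log_exp, hLdef] at h
    linarith
  obtain ⟨c, hcdef⟩ : ∃ c : ℝ, c = L - 3/2 := ⟨_, rfl⟩
  have hcpos : 0 < c := by rw [hcdef]; linarith
  obtain ⟨m, hm16, h2c, h64, h4L⟩ :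
      ∃ m : ℝ, 16 ≤ m ∧ 2*c + 2 ≤ m*c ∧ 64 ≤ m*c^2 ∧ 4*L ≤ m*c := by
    refine ⟨max 16 (max (2 + 2/c) (max (64/c^2) (4*L/c))), le_max_left _ _, ?_, ?_, ?_⟩
    · have h : 2 + 2/c ≤ max 16 (max (2 + 2/c) (max (64/c^2) (4*L/c))) :=
        le_trans (le_max_left _ _) (le_max_right _ _)
      have h2 := (div_le_iff₀ hcpos).mp (by linarith : 2/c ≤ max 16 (max (2 + 2/c) (max (64/c^2) (4*L/c))) - 2)
      nlinarith
    · have h : 64/c^2 ≤ max 16 (max (2 + 2/c) (max (64/c^2) (4*L/c))) :=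
        le_trans (le_trans (le_max_left _ _) (le_max_right _ _)) (le_max_right _ _)
      have h2 := (div_le_iff₀ (by positivity : (0:ℝ) < c^2)).mp h
      linarith
    · have h : 4*L/c ≤ max 16 (max (2 + 2/c) (max (64/c^2) (4*L/c))) :=
        le_trans (le_trans (le_max_right _ _) (le_max_right _ _)) (le_max_right _ _)
      have h2 := (div_le_iff₀ hcpos).mp h
      linarith
  have hmpos : (0:ℝ) < m := by linarith
  obtain ⟨q, hq2, hq0⟩ : ∃ q : ℝ, q * q = m ∧ 0 ≤ q ∧ Real.log q ≤ q - 1 :=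
    ⟨Real.sqrt m, Real.mul_self_sqrt hmpos.le, Real.sqrt_nonneg m,
      Real.log_le_sub_one_of_pos (Real.sqrt_pos.mpr hmpos)⟩
  obtain ⟨hq0, hqlog⟩ := hq0
  have hq4 : 4 ≤ q := by nlinarith
  have hlogm : Real.log m ≤ 2*q - 2 := by
    have : Real.log m = Real.log (q*q) := by rw [hq2]
    rw [this, Real.log_mul (by linarith) (by linarith)]
    linarith
  have hcq : 8 ≤ c * q := by nlinarith
  have hcm2 : 2 * (Real.log m + L) ≤ c * m := by nlinarith
  have hmL : 2 * Real.log m ≤ (m - 2) * L := by nlinarith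
  -- the superquadraticity-type inequality
  have hmono : ∀ τ : ℝ, 0 ≤ τ → 2*m*F1 δ₀ τ ≤ F1 δ₀ (m*τ) := by
    intro τ hτ
    rcases eq_or_lt_of_le hτ with h0 | hτpos
    · simp [← h0, aux_F1_zero]
    by_cases h1 : m*τ < δ₀
    · -- both small
      have hτδ : τ < δ₀ :=
        lt_of_le_of_lt (le_mul_of_one_le_left hτ (by linarith)) h1
      rw [aux_F1_small δ₀ τ hτpos hτδ, aux_F1_small δ₀ (m*τ) (by positivity) h1]
      obtain ⟨y, hydef⟩ : ∃ y : ℝ, Real.log τ = -y := ⟨-Real.log τ, by ring⟩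
      have hlt2 : Real.log (τ^2) = -(2*y) := by
        rw [Real.log_pow, hydef]; push_cast; ring
      have hlmt2 : Real.log ((m*τ)^2) = 2*(Real.log m - y) := by
        rw [Real.log_pow, Real.log_mul hmpos.ne' hτpos.ne', hydef]
        push_cast; ring
      have hylb : L + Real.log m ≤ y := by
        have hτlt : τ < δ₀ / m := (lt_div_iff₀ hmpos).mpr (by linarith)
        have h := Real.log_lt_log hτpos hτlt
        rw [Real.log_div hδ₀.ne' hmpos.ne', hydef, hLdef] at h
        linarith
      rw [hlt2, hlmt2]
      have key : m * Real.log m ≤ (m - 2) * y := by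
        have p1 : (m-2)*(L+Real.log m) ≤ (m-2)*y :=
          mul_le_mul_of_nonneg_left hylb (by linarith)
        nlinarith [p1, hmL]
      linarith [mul_le_mul_of_nonneg_left key (by positivity : (0:ℝ) ≤ m*τ^2)]
    · push_neg at h1
      by_cases h2 : τ < δ₀
      · -- τ small, m*τ big
        rw [aux_F1_small δ₀ τ hτpos h2, aux_F1_big δ₀ (m*τ) hδ₀ h1]
        obtain ⟨y, hydef⟩ : ∃ y : ℝ, Real.log τ = -y := ⟨-Real.log τ, by ring⟩
        have hlt2 : Real.log (τ^2) = -(2*y) := by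
          rw [Real.log_pow, hydef]; push_cast; ring
        have hyub : y ≤ L + Real.log m := by
          have hτge : δ₀ / m ≤ τ := (div_le_iff₀ hmpos).mpr (by linarith)
          have h := Real.log_le_log (by positivity) hτge
          rw [Real.log_div hδ₀.ne' hmpos.ne', hydef, hLdef] at h
          linarith
        rw [hlt2, hLdef]
        have hLc : -(-L) - 3/2 = c := by rw [hcdef]; ring
        rw [hLc]
        have hkey : 2*y ≤ c*m := by linarith
        linarith [mul_le_mul_of_nonneg_left hkey (by positivity : (0:ℝ) ≤ m*τ^2),
          mul_le_mul_of_nonneg_left h1 (by linarith : (0:ℝ) ≤ 2*δ₀), sq_nonneg δ₀]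
      · -- both big
        push_neg at h2
        have h3 : δ₀ ≤ m*τ :=
          le_trans h2 (le_mul_of_one_le_left hτ (by linarith))
        rw [aux_F1_big δ₀ τ hδ₀ h2, aux_F1_big δ₀ (m*τ) hδ₀ h3, hLdef]
        have hLc : -(-L) - 3/2 = c := by rw [hcdef]; ring
        rw [hLc]
        have hcm2' : 2 ≤ c * (m - 2) := by nlinarith
        have hd : 2*m*(δ₀*τ) ≤ 2*m*(τ*τ) :=
          mul_le_mul_of_nonneg_left (mul_le_mul_of_nonneg_right h2 hτpos.le)
            (by linarith)
        linarith [mul_le_mul_of_nonneg_left hcm2'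
            (by positivity : (0:ℝ) ≤ m*τ^2),
          mul_le_mul_of_nonneg_left h2 (by positivity : (0:ℝ) ≤ 2*δ₀*m), hd,
          mul_le_mul_of_nonneg_right hm16 (sq_nonneg δ₀), sq_nonneg δ₀]
  -- lower bound for F1
  have hlb : ∀ t : ℝ, 0 ≤ t → c*t^2 - δ₀^2/2 ≤ F1 δ₀ t := by
    intro t ht
    rcases eq_or_lt_of_le ht with h0 | htpos
    · rw [← h0, aux_F1_zero]; nlinarith [sq_nonneg δ₀]
    by_cases h2 : t < δ₀
    · rw [aux_F1_small δ₀ t htpos h2]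
      have hlt2 : Real.log (t^2) = 2 * Real.log t := by
        rw [Real.log_pow]; push_cast; ring
      rw [hlt2]
      have hlog : Real.log t ≤ Real.log δ₀ := Real.log_le_log htpos h2.le
      have hlog2 : Real.log t ≤ -L := by rw [hLdef] at hlog; linarith
      have hce : c ≤ L := by rw [hcdef]; linarith
      nlinarith [sq_nonneg t, sq_nonneg δ₀,
        mul_le_mul_of_nonneg_left hlog2 (sq_nonneg t)]
    · push_neg at h2
      rw [aux_F1_big δ₀ t hδ₀ h2, hLdef]
      have hLc : -(-L) - 3/2 = c := by rw [hcdef]; ring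
      rw [hLc]
      nlinarith [mul_pos hδ₀ (lt_of_lt_of_le hδ₀ h2)]
  refine ⟨2*m, by linarith, fun s hs => ?_⟩
  have hBdd : BddAbove ((fun t => s * t - F1 δ₀ t) '' Set.Ici (0:ℝ)) := by
    refine ⟨s^2/(4*c) + δ₀^2/2, ?_⟩
    rintro x ⟨t, ht, rfl⟩
    have h1 := hlb t ht
    have h2 : s*t - c*t^2 ≤ s^2/(4*c) := by
      rw [le_div_iff₀ (by positivity : (0:ℝ) < 4*c)]
      nlinarith [sq_nonneg (s - 2*c*t)]
    simp only []
    linarith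
  have hmem0 : (0:ℝ) ∈ (fun t => s * t - F1 δ₀ t) '' Set.Ici (0:ℝ) :=
    ⟨0, Set.self_mem_Ici, by simp [aux_F1_zero]⟩
  have hS0 : (0:ℝ) ≤ F1conj δ₀ s := le_csSup hBdd hmem0
  rw [F1conj]
  apply Real.sSup_le
  · rintro x ⟨t, ht, rfl⟩
    have htm : (0:ℝ) ≤ t/m := div_nonneg ht hmpos.le
    have h1 : s*(t/m) - F1 δ₀ (t/m) ≤ F1conj δ₀ s :=
      le_csSup hBdd ⟨t/m, htm, rfl⟩
    have h2 := hmono (t/m) htm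
    have h3 : m*(t/m) = t := by field_simp
    rw [h3] at h2
    have h4 : (2*s)*t - F1 δ₀ t ≤ 2*m*(s*(t/m) - F1 δ₀ (t/m)) := by
      have h5 : 2*m*(s*(t/m)) = 2*s*t := by field_simp
      linarith [h2, h5]
    calc (2*s)*t - F1 δ₀ t ≤ 2*m*(s*(t/m) - F1 δ₀ (t/m)) := h4
      _ ≤ 2*m*F1conj δ₀ s :=
        mul_le_mul_of_nonneg_left h1 (by linarith)
  · exact mul_nonneg (by linarith) hS0
end

section
/- The function G₁ : ℝ → ℝ defined by G₁(s) = F₁'(s)·s is continuously differentiable on ℝ, and there exists C > 0 such that |G₁'(s)| ≤ C·(1 + |s|) for all s ∈ ℝ. -/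
/-!
Away from `0` and `±δ₀`, `G₁` is locally `-(log s² + 1) s²` or `-(log δ₀² + 3) s² + 2δ₀|s|`, so
it is differentiable there with an explicit derivative `G₁'`. This `G₁'` is continuous on all of
`ℝ`: at `0` because `s log s → 0`, and at `±δ₀` because the two formulas have equal values and
slopes there. A continuous function whose derivative off a finite set extends continuously is
differentiable everywhere with that derivative, so `G₁` is `C¹`. Finally `G₁'` grows linearly
outside `[-δ₀, δ₀]` and is bounded on that compact interval.
-/

open Real Filter

open Set Topology

theorem hasDerivAt_of_hasDerivAt_off_finite {E : Type*} [NormedAddCommGroup E]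
    [NormedSpace ℝ E] {f g : ℝ → E} {S : Set ℝ} (hS : S.Finite) (hf : Continuous f)
    (hg : Continuous g) (h : ∀ y ∉ S, HasDerivAt f (g y) y) (x : ℝ) :
    HasDerivAt f (g x) x := by
  have hS' : ∀ᶠ y in 𝓝[≠] x, y ∉ S := by
    filter_upwards [nhdsNE_of_nhdsNE_sdiff_finite (x := x) univ_mem hS.to_subtype]
      with y hy using hy.2
  have hdiff : DifferentiableOn ℝ f Sᶜ := fun y hy =>
    (h y hy).differentiableAt.differentiableWithinAt
  have hlim : Tendsto (deriv f) (𝓝[≠] x) (𝓝 (g x)) :=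
    (hg.continuousAt.tendsto.mono_left nhdsWithin_le_nhds).congr'
      (hS'.mono fun y hy => (h y hy).deriv.symm)
  have hleft := hasDerivWithinAt_Iic_of_tendsto_deriv hdiff hf.continuousWithinAt
    (nhdsLT_le_nhdsNE x hS') (hlim.mono_left (nhdsLT_le_nhdsNE x))
  have hright := hasDerivWithinAt_Ici_of_tendsto_deriv hdiff hf.continuousWithinAt
    (nhdsGT_le_nhdsNE x hS') (hlim.mono_left (nhdsGT_le_nhdsNE x))
  simpa only [Iic_union_Ici, hasDerivWithinAt_univ] using hleft.union hright

theorem exists_abs_le_mul_one_add_abs_of_continuous {f : ℝ → ℝ} (hf : Continuous f) {r A : ℝ}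
    (h : ∀ s, r ≤ |s| → |f s| ≤ A * (1 + |s|)) :
    ∃ C, 0 < C ∧ ∀ s, |f s| ≤ C * (1 + |s|) := by
  obtain ⟨M, hM⟩ := (isCompact_closedBall (0 : ℝ) r).exists_bound_of_continuousOn hf.continuousOn
  refine ⟨|A| + |M| + 1, by positivity, fun s => ?_⟩
  have hs : 1 ≤ 1 + |s| := le_add_of_nonneg_right (abs_nonneg s)
  rcases le_total r |s| with hrs | hsr
  · calc |f s| ≤ A * (1 + |s|) := h s hrs
      _ ≤ (|A| + |M| + 1) * (1 + |s|) := by gcongr; linarith [le_abs_self A, abs_nonneg M]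
  · calc |f s| ≤ M := hM s (by simpa using hsr)
      _ ≤ |A| + |M| + 1 := by linarith [le_abs_self M, abs_nonneg A]
      _ ≤ (|A| + |M| + 1) * (1 + |s|) := le_mul_of_one_le_right (by positivity) hs

noncomputable def G1 (δ₀ s : ℝ) : ℝ :=
  if δ₀ ≤ |s| then -(log (δ₀^2) + 3) * s^2 + 2*δ₀*|s| else -(log (s^2) + 1) * s^2

/- `max (-δ₀) (min δ₀ s)` clamps `s` to `[-δ₀, δ₀]`; on `δ₀ ≤ |s|` it equals `δ₀ * sign s`, and
unlike `sign` it is continuous on all of `ℝ`. -/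
noncomputable def G1' (δ₀ s : ℝ) : ℝ :=
  if δ₀ ≤ |s| then -2*(log (δ₀^2) + 3) * s + 2 * max (-δ₀) (min δ₀ s)
  else -2*s*(log (s^2) + 2)

theorem Real.sign_mul_self (r : ℝ) : Real.sign r * r = |r| := by
  rcases lt_trichotomy r 0 with h | rfl | h
  · rw [Real.sign_of_neg h, abs_of_neg h]; ring
  · simp
  · rw [Real.sign_of_pos h, abs_of_pos h, one_mul]

theorem F1'_mul_eq_G1 (δ₀ : ℝ) : (fun s : ℝ => F1' δ₀ s * s) = G1 δ₀ := by
  funext s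
  rcases eq_or_ne s 0 with rfl | hs0
  · simp [F1', G1]
  by_cases hs : |s| < δ₀
  · rw [F1', G1, if_neg hs0, if_pos hs, if_neg (not_le.2 hs)]; ring
  · rw [F1', G1, if_neg hs0, if_neg hs, if_pos (not_lt.1 hs), ← Real.sign_mul_self]; ring

theorem continuous_G1 (δ₀ : ℝ) : Continuous (G1 δ₀) := by
  have hinner : Continuous fun s : ℝ => -(log (s^2) + 1) * s^2 := by
    have : Continuous fun s : ℝ => -(s^2 * log (s^2)) - s^2 :=
      (continuous_mul_log.comp (continuous_pow 2)).neg.sub (continuous_pow 2)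
    convert this using 2; ring
  refine Continuous.if_le (by fun_prop) hinner continuous_const continuous_abs fun s hs => ?_
  subst hs
  rw [sq_abs, mul_assoc, abs_mul_abs_self]; ring

theorem continuous_G1' (δ₀ : ℝ) : Continuous (G1' δ₀) := by
  have hinner : Continuous fun s : ℝ => -2*s*(log (s^2) + 2) := by
    have : Continuous fun s : ℝ => -4 * (s * log s) - 4 * s :=
      (continuous_const.mul continuous_mul_log).sub (continuous_const.mul continuous_id)
    convert this using 2 with s; rw [Real.log_pow]; push_cast; ring
  refine Continuous.if_le (by fun_prop) hinner continuous_const continuous_abs fun s hs => ?_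
  subst hs
  rw [min_eq_right (le_abs_self s), max_eq_right (neg_abs_le s), sq_abs]; ring

theorem hasDerivAt_G1_of_abs_lt {δ₀ s : ℝ} (hs0 : s ≠ 0) (hs : |s| < δ₀) :
    HasDerivAt (G1 δ₀) (G1' δ₀ s) s := by
  have hG : G1 δ₀ =ᶠ[𝓝 s] fun x => -(log (x^2) + 1) * x^2 := by
    filter_upwards [(isOpen_lt continuous_abs continuous_const).mem_nhds hs] with x hx
    exact if_neg (not_le.2 hx)
  have hsq : HasDerivAt (fun x : ℝ => x^2) (2 * s) s := by simpa using hasDerivAt_pow 2 s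
  have h := ((hsq.log (pow_ne_zero 2 hs0)).add_const 1).neg.mul hsq
  rw [G1', if_neg (not_le.2 hs)]
  refine (h.congr_of_eventuallyEq hG).congr_deriv ?_
  simp only [Pi.neg_apply]
  field_simp
  ring

theorem hasDerivAt_G1_of_lt_abs {δ₀ s : ℝ} (hδ₀ : 0 ≤ δ₀) (hs : δ₀ < |s|) :
    HasDerivAt (G1 δ₀) (G1' δ₀ s) s := by
  have hG : G1 δ₀ =ᶠ[𝓝 s] fun x => -(log (δ₀^2) + 3) * x^2 + 2*δ₀*|x| := by
    filter_upwards [(isOpen_lt continuous_const continuous_abs).mem_nhds hs] with x hx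
    exact if_pos hx.le
  have hsq : HasDerivAt (fun x : ℝ => x^2) (2 * s) s := by simpa using hasDerivAt_pow 2 s
  rw [G1', if_pos hs.le]
  rcases lt_abs.1 hs with hpos | hneg
  · have h := (hsq.const_mul (-(log (δ₀^2) + 3))).add
      ((hasDerivAt_abs_pos (hδ₀.trans_lt hpos)).const_mul (2*δ₀))
    refine (h.congr_of_eventuallyEq hG).congr_deriv ?_
    rw [min_eq_left hpos.le, max_eq_right (by linarith)]; ring
  · have h := (hsq.const_mul (-(log (δ₀^2) + 3))).add
      ((hasDerivAt_abs_neg (by linarith)).const_mul (2*δ₀))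
    refine (h.congr_of_eventuallyEq hG).congr_deriv ?_
    rw [min_eq_right (by linarith), max_eq_left (by linarith)]; ring

theorem hasDerivAt_G1 {δ₀ : ℝ} (hδ₀ : 0 ≤ δ₀) (s : ℝ) : HasDerivAt (G1 δ₀) (G1' δ₀ s) s := by
  refine hasDerivAt_of_hasDerivAt_off_finite (S := {0, δ₀, -δ₀}) (toFinite _)
    (continuous_G1 δ₀) (continuous_G1' δ₀) (fun y hy => ?_) s
  simp only [mem_insert_iff, mem_singleton_iff, not_or] at hy
  obtain ⟨hy0, hyδ, hyδ'⟩ := hy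
  have hyabs : |y| ≠ δ₀ := fun h => ((abs_eq hδ₀).1 h).elim hyδ hyδ'
  rcases lt_or_gt_of_ne hyabs with h | h
  · exact hasDerivAt_G1_of_abs_lt hy0 h
  · exact hasDerivAt_G1_of_lt_abs hδ₀ h

theorem abs_G1'_le {δ₀ s : ℝ} (hδ₀ : 0 ≤ δ₀) (hs : δ₀ ≤ |s|) :
    |G1' δ₀ s| ≤ (2 * |log (δ₀^2) + 3| + 2 * δ₀) * (1 + |s|) := by
  have hc : |max (-δ₀) (min δ₀ s)| ≤ δ₀ :=
    abs_le.2 ⟨le_max_left _ _, max_le (by linarith) (min_le_left _ _)⟩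
  rw [G1', if_pos hs]
  calc _ ≤ |-2*(log (δ₀^2) + 3) * s| + |2 * max (-δ₀) (min δ₀ s)| := abs_add_le _ _
    _ = 2 * |log (δ₀^2) + 3| * |s| + 2 * |max (-δ₀) (min δ₀ s)| := by
      simp only [abs_mul, abs_neg, abs_two]
    _ ≤ _ := by nlinarith [abs_nonneg (log (δ₀^2) + 3), abs_nonneg s]

theorem stmt_12_general (δ₀ : ℝ) (hδ₀ : 0 < δ₀) :
    ContDiff ℝ 1 (fun s : ℝ => F1' δ₀ s * s) ∧
      ∃ C : ℝ, 0 < C ∧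
        ∀ s : ℝ, |deriv (fun s : ℝ => F1' δ₀ s * s) s| ≤ C * (1 + |s|) := by
  rw [F1'_mul_eq_G1]
  have hderiv : deriv (G1 δ₀) = G1' δ₀ := funext fun s => (hasDerivAt_G1 hδ₀.le s).deriv
  refine ⟨contDiff_one_iff_deriv.2 ⟨fun s => (hasDerivAt_G1 hδ₀.le s).differentiableAt, ?_⟩, ?_⟩
  · exact hderiv ▸ continuous_G1' δ₀
  · rw [hderiv]
    exact exists_abs_le_mul_one_add_abs_of_continuous (continuous_G1' δ₀)
      fun s => abs_G1'_le hδ₀.le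

theorem stmt_12 (δ₀ : ℝ) (hδ₀ : 0 < δ₀) (hδ₀' : δ₀ < Real.exp (-(3/2))) :
    ContDiff ℝ 1 (fun s : ℝ => F1' δ₀ s * s) ∧
      ∃ C : ℝ, 0 < C ∧
        ∀ s : ℝ, |deriv (fun s : ℝ => F1' δ₀ s * s) s| ≤ C * (1 + |s|) :=
  stmt_12_general δ₀ hδ₀
end

section
/- The map s ↦ F₂'(s)/s is monotone nondecreasing on (0, +∞) and strictly increasing on (δ₀, +∞). -/
open Real Filter

theorem stmt_14 (δ₀ : ℝ) (hδ₀ : 0 < δ₀) (hδ₀' : δ₀ < Real.exp (-(3/2))) :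
    MonotoneOn (fun s : ℝ => F2' δ₀ s / s) (Set.Ioi 0) ∧
      StrictMonoOn (fun s : ℝ => F2' δ₀ s / s) (Set.Ioi δ₀) := by
  -- explicit value for s ≥ δ₀
  have hval : ∀ s : ℝ, 0 < s → δ₀ ≤ s →
      F2' δ₀ s / s = Real.log (s^2/δ₀^2) - 2 + 2*δ₀/s := by
    intro s hs hδs
    unfold F2'
    rw [if_neg (by rw [abs_of_pos hs]; exact not_lt.mpr hδs), Real.sign_of_pos hs]
    field_simp
  have elog : ∀ x : ℝ, 0 < x →
      Real.log (x^2/δ₀^2) = 2*Real.log x - 2*Real.log δ₀ := by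
    intro x hx
    rw [Real.log_div (by positivity) (by positivity), Real.log_pow, Real.log_pow]
    push_cast; ring
  -- key nonstrict inequality
  have key : ∀ a b : ℝ, δ₀ ≤ a → a ≤ b →
      Real.log (a^2/δ₀^2) - 2 + 2*δ₀/a ≤ Real.log (b^2/δ₀^2) - 2 + 2*δ₀/b := by
    intro a b hδa hab
    have ha : 0 < a := lt_of_lt_of_le hδ₀ hδa
    have hb : 0 < b := lt_of_lt_of_le ha hab
    have hlog : Real.log a - Real.log b ≤ a/b - 1 := by
      have := Real.log_le_sub_one_of_pos (show 0 < a/b by positivity)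
      rwa [Real.log_div ha.ne' hb.ne'] at this
    have h2 : 2*δ₀/a - 2*δ₀/b ≤ 2 - 2*(a/b) := by
      rw [div_sub_div _ _ ha.ne' hb.ne',
        show (2:ℝ) - 2*(a/b) = (2*b-2*a)/b by field_simp,
        div_le_div_iff₀ (by positivity) (by positivity)]
      nlinarith [mul_le_mul_of_nonneg_right
        (mul_le_mul_of_nonneg_right hδa (sub_nonneg.mpr hab)) hb.le]
    rw [elog a ha, elog b hb]
    linarith
  -- key strict inequality
  have keys : ∀ a b : ℝ, δ₀ < a → a < b →
      Real.log (a^2/δ₀^2) - 2 + 2*δ₀/a < Real.log (b^2/δ₀^2) - 2 + 2*δ₀/b := by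
    intro a b hδa hab
    have ha : 0 < a := lt_trans hδ₀ hδa
    have hb : 0 < b := lt_trans ha hab
    have hne : a/b ≠ 1 := by
      intro h
      have : a = b := by field_simp at h; linarith
      linarith
    have hlog : Real.log a - Real.log b < a/b - 1 := by
      have := Real.log_lt_sub_one_of_pos (show 0 < a/b by positivity) hne
      rwa [Real.log_div ha.ne' hb.ne'] at this
    have h2 : 2*δ₀/a - 2*δ₀/b ≤ 2 - 2*(a/b) := by
      rw [div_sub_div _ _ ha.ne' hb.ne',
        show (2:ℝ) - 2*(a/b) = (2*b-2*a)/b by field_simp,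
        div_le_div_iff₀ (by positivity) (by positivity)]
      nlinarith [mul_le_mul_of_nonneg_right
        (mul_le_mul_of_nonneg_right hδa.le (sub_nonneg.mpr hab.le)) hb.le]
    rw [elog a ha, elog b hb]
    linarith
  have hδval : Real.log (δ₀^2/δ₀^2) - 2 + 2*δ₀/δ₀ = 0 := by
    rw [div_self (by positivity), Real.log_one, mul_div_assoc, div_self hδ₀.ne']
    ring
  constructor
  · intro a ha b hb hab
    simp only [Set.mem_Ioi] at ha hb
    by_cases hbδ : b < δ₀
    · have haδ : a < δ₀ := lt_of_le_of_lt hab hbδ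
      have hA : F2' δ₀ a / a = 0 := by
        simp [F2', abs_of_pos ha, haδ]
      have hB : F2' δ₀ b / b = 0 := by
        simp [F2', abs_of_pos hb, hbδ]
      simp [hA, hB]
    · push_neg at hbδ
      by_cases haδ : a < δ₀
      · have : F2' δ₀ a / a = 0 := by
          simp [F2', abs_of_pos ha, haδ]
        simp only [this, hval b hb hbδ]
        have := key δ₀ b le_rfl hbδ
        linarith [hδval]
      · push_neg at haδ
        simp only [hval a ha haδ, hval b hb hbδ]
        exact key a b haδ hab
  · intro a ha b hb hab
    simp only [Set.mem_Ioi] at ha hb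
    have ha0 : 0 < a := lt_trans hδ₀ ha
    have hb0 : 0 < b := lt_trans hδ₀ hb
    simp only [hval a ha0 ha.le, hval b hb0 hb.le]
    exact keys a b ha hab
end

section
/- For every s ∈ ℝ one has F₁'(s)·s ≥ 0, and the map s ↦ F₁'(s)/s is monotone nonincreasing on (0, +∞). -/
open Real Filter

theorem stmt_16 (δ₀ : ℝ) (hδ₀ : 0 < δ₀) (hδ₀' : δ₀ < Real.exp (-(3/2))) :
    (∀ s : ℝ, 0 ≤ F1' δ₀ s * s) ∧
      AntitoneOn (fun s : ℝ => F1' δ₀ s / s) (Set.Ioi 0) := by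
  have hδsq : δ₀^2 < Real.exp (-3) := by
    have h : (Real.exp (-(3/2)))^2 = Real.exp (-3) := by
      rw [sq, ← Real.exp_add]; norm_num
    nlinarith [Real.exp_pos (-(3/2))]
  have hδ3 : Real.log (δ₀^2) + 3 ≤ 0 := by
    have := (Real.log_lt_iff_lt_exp (by positivity)).mpr hδsq
    linarith
  have key : ∀ s : ℝ, 0 < s → F1' δ₀ s / s =
      if s < δ₀ then -(Real.log (s^2)+1) else -(Real.log (δ₀^2)+3) + 2*δ₀/s := by
    intro s hs
    unfold F1'
    rw [if_neg hs.ne', abs_of_pos hs, Real.sign_of_pos hs]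
    by_cases h : s < δ₀
    · rw [if_pos h, if_pos h]
      field_simp
    · rw [if_neg h, if_neg h]
      field_simp
  constructor
  · intro s
    rcases eq_or_ne s 0 with rfl | hs
    · simp [F1']
    · unfold F1'
      rw [if_neg hs]
      by_cases h : |s| < δ₀
      · rw [if_pos h]
        have hsq : s^2 < Real.exp (-3) := by
          have h1 : |s|^2 < δ₀^2 := by nlinarith [abs_nonneg s]
          rw [sq_abs] at h1
          linarith
        have hlog : Real.log (s^2) + 1 ≤ 0 := by
          have := (Real.log_lt_iff_lt_exp (by positivity)).mpr hsq
          linarith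
        nlinarith [sq_nonneg s]
      · rw [if_neg h]
        push_neg at h
        rcases hs.lt_or_gt with hneg | hpos
        · rw [Real.sign_of_neg hneg]
          have habs : |s| = -s := abs_of_neg hneg
          rw [habs] at h
          nlinarith [sq_nonneg s]
        · rw [Real.sign_of_pos hpos]
          have habs : |s| = s := abs_of_pos hpos
          rw [habs] at h
          nlinarith [sq_nonneg s]
  · intro a ha b hb hab
    simp only [Set.mem_Ioi] at ha hb
    simp only [key a ha, key b hb]
    by_cases hb' : b < δ₀
    · have ha' : a < δ₀ := lt_of_le_of_lt hab hb'
      rw [if_pos ha', if_pos hb']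
      have hlog : Real.log (a^2) ≤ Real.log (b^2) :=
        Real.log_le_log (by positivity) (by nlinarith)
      linarith
    · rw [if_neg hb']
      push_neg at hb'
      by_cases ha' : a < δ₀
      · rw [if_pos ha']
        have h1 : Real.log (a^2) ≤ Real.log (δ₀^2) :=
          Real.log_le_log (by positivity) (by nlinarith)
        have h2 : 2*δ₀/b ≤ 2 := by
          rw [div_le_iff₀ hb]; nlinarith
        linarith
      · rw [if_neg ha']
        push_neg at ha'
        have h2 : 2*δ₀/b ≤ 2*δ₀/a :=
          div_le_div_of_nonneg_left (by linarith) ha hab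
        linarith
end

section
/- Let p > 2 and M > 0. Define G : [0, +∞) → ℝ by G(t) = max(F₂'(t) − F₁'(t) + t^{p−1}, 0) for t > 0 and G(0) = 0. Then there exist τ ∈ (0, δ₀) and L > 0 such that G(t) = 0 for all t ∈ [0, τ], |G(s) − G(t)| ≤ L·|s − t| for all s, t ∈ [0, M], and G(t) ≤ L·t for all t ∈ [0, M]. -/
open Real Filter

noncomputable def Gfun (δ₀ p t : ℝ) : ℝ :=
  if t = 0 then 0 else max (F2' δ₀ t - F1' δ₀ t + t ^ (p - 1)) 0

/-!
For `t > 0` the two branches of `F₂' - F₁'` glue to the single formula `t (2 log t + 1)`, so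
`G = max(H, 0)` with `H t = t (2 log t + 1) + t^(p-1)`. On `[0, e⁻¹]` we have `t^(p-1) ≤ t` and
`2 log t + 1 ≤ -1`, so `H ≤ 0` and `G` vanishes there. On `[e⁻¹, M]` the derivative
`2 log t + 3 + (p-1) t^(p-2)` of `H` is bounded, so `H`, hence `G`, is Lipschitz there. Gluing the
two intervals makes `G` Lipschitz on `[0, M]`, and `G 0 = 0` turns this into `G t ≤ L t`.
-/

open Set NNReal

theorem LipschitzOnWith.Icc_union_Icc {β : Type*} [PseudoMetricSpace β] {f : ℝ → β} {K : ℝ≥0}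
    {a b c : ℝ} (hab : LipschitzOnWith K f (Icc a b)) (hbc : LipschitzOnWith K f (Icc b c)) :
    LipschitzOnWith K f (Icc a c) := by
  have of_le : ∀ x ∈ Icc a c, ∀ y ∈ Icc a c, x ≤ y → dist (f x) (f y) ≤ K * dist x y := by
    intro x hx y hy hxy
    by_cases hyb : y ≤ b
    · exact hab.dist_le_mul x ⟨hx.1, hxy.trans hyb⟩ y ⟨hy.1, hyb⟩
    by_cases hbx : b ≤ x
    · exact hbc.dist_le_mul x ⟨hbx, hx.2⟩ y ⟨hbx.trans hxy, hy.2⟩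
    rw [not_le] at hyb hbx
    calc dist (f x) (f y) ≤ dist (f x) (f b) + dist (f b) (f y) := dist_triangle _ _ _
      _ ≤ K * dist x b + K * dist b y :=
        add_le_add (hab.dist_le_mul x ⟨hx.1, hbx.le⟩ b ⟨hx.1.trans hbx.le, le_rfl⟩)
          (hbc.dist_le_mul b ⟨le_rfl, hyb.le.trans hy.2⟩ y ⟨hyb.le, hy.2⟩)
      _ = K * dist x y := by
        rw [Real.dist_eq, Real.dist_eq, Real.dist_eq, abs_of_neg (by linarith),
          abs_of_neg (by linarith), abs_of_nonpos (by linarith)]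
        ring
  refine LipschitzOnWith.of_dist_le_mul fun x hx y hy => ?_
  rcases le_total x y with hxy | hyx
  · exact of_le x hx y hy hxy
  · rw [dist_comm, dist_comm x]
    exact of_le y hy x hx hyx

noncomputable def Hfun (p t : ℝ) : ℝ := t * (2 * log t + 1) + t ^ (p - 1)

theorem F2'_sub_F1'_of_pos {δ₀ t : ℝ} (hδ₀ : 0 < δ₀) (ht : 0 < t) :
    F2' δ₀ t - F1' δ₀ t = t * (2 * log t + 1) := by
  have hlog_sq : ∀ x : ℝ, log (x ^ 2) = 2 * log x := fun x => by
    rw [Real.log_pow]; push_cast; ring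
  unfold F2' F1'
  rw [if_neg ht.ne', abs_of_pos ht]
  split_ifs
  · rw [hlog_sq]; ring
  · rw [Real.sign_of_pos ht, Real.log_div (by positivity) (by positivity), hlog_sq, hlog_sq]
    ring

theorem Gfun_eq_max_Hfun {δ₀ p t : ℝ} (hδ₀ : 0 < δ₀) (hp : p ≠ 1) (ht : 0 ≤ t) :
    Gfun δ₀ p t = max (Hfun p t) 0 := by
  rcases ht.eq_or_lt with rfl | ht
  · simp [Gfun, Hfun, Real.zero_rpow (sub_ne_zero.mpr hp)]
  · rw [Gfun, if_neg ht.ne', F2'_sub_F1'_of_pos hδ₀ ht, Hfun]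

theorem Hfun_nonpos {p t : ℝ} (hp : 2 ≤ p) (ht₀ : 0 ≤ t) (ht : t ≤ exp (-1)) : Hfun p t ≤ 0 := by
  rcases ht₀.eq_or_lt with rfl | ht₀
  · simp [Hfun, Real.zero_rpow (by linarith : p - 1 ≠ 0)]
  have ht_le_one : t ≤ 1 := ht.trans (exp_le_one_iff.mpr (by norm_num))
  have hlog : log t ≤ -1 := (log_le_iff_le_exp ht₀).mpr ht
  have hpow : t ^ (p - 1) ≤ t := rpow_le_self_of_le_one ht₀.le ht_le_one (by linarith)
  have hlin : t * (2 * log t + 1) ≤ -t := by nlinarith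
  rw [Hfun]
  linarith

theorem Gfun_eq_zero {δ₀ p t : ℝ} (hδ₀ : 0 < δ₀) (hp : 2 ≤ p) (ht₀ : 0 ≤ t)
    (ht : t ≤ exp (-1)) : Gfun δ₀ p t = 0 := by
  rw [Gfun_eq_max_Hfun hδ₀ (by linarith) ht₀, max_eq_right (Hfun_nonpos hp ht₀ ht)]

theorem hasDerivAt_Hfun {p t : ℝ} (ht : 0 < t) :
    HasDerivAt (Hfun p) (2 * log t + 3 + (p - 1) * t ^ (p - 2)) t := by
  have hlin : HasDerivAt (fun x => x * (2 * log x + 1)) (1 * (2 * log t + 1) + t * (2 * t⁻¹)) t :=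
    (hasDerivAt_id t).mul (((hasDerivAt_log ht.ne').const_mul 2).add_const 1)
  have hpow := hasDerivAt_rpow_const (p := p - 1) (Or.inl ht.ne')
  refine (hlin.add hpow).congr_deriv (f := Hfun p) ?_
  rw [show p - 1 - 1 = p - 2 by ring]
  field_simp
  ring

theorem lipschitzOnWith_Hfun {p b : ℝ} (hp : 2 ≤ p) :
    LipschitzOnWith (Real.toNNReal (2 * log b + 3 + (p - 1) * b ^ (p - 2))) (Hfun p)
      (Icc (exp (-1)) b) := by
  refine LipschitzOnWith.of_dist_le' fun x hx y hy => ?_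
  have hderiv : ∀ z ∈ Icc (exp (-1)) b, HasDerivWithinAt (Hfun p)
      (2 * log z + 3 + (p - 1) * z ^ (p - 2)) (Icc (exp (-1)) b) z :=
    fun z hz => (hasDerivAt_Hfun ((exp_pos _).trans_le hz.1)).hasDerivWithinAt
  have hbound : ∀ z ∈ Icc (exp (-1)) b,
      ‖2 * log z + 3 + (p - 1) * z ^ (p - 2)‖ ≤ 2 * log b + 3 + (p - 1) * b ^ (p - 2) := by
    intro z hz
    have hz₀ : 0 < z := (exp_pos _).trans_le hz.1
    have hlog_ge : -1 ≤ log z := (le_log_iff_exp_le hz₀).mpr hz.1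
    have hlog_le : log z ≤ log b := log_le_log hz₀ hz.2
    have hpow₀ : 0 ≤ (p - 1) * z ^ (p - 2) := by have := rpow_nonneg hz₀.le (p - 2); nlinarith
    have hpow_le : z ^ (p - 2) ≤ b ^ (p - 2) := rpow_le_rpow hz₀.le hz.2 (by linarith)
    rw [Real.norm_eq_abs, abs_of_nonneg (by linarith)]
    nlinarith
  simpa only [Real.dist_eq, ← Real.norm_eq_abs] using
    (convex_Icc _ _).norm_image_sub_le_of_norm_hasDerivWithin_le hderiv hbound hy hx

theorem lipschitzOnWith_Gfun {δ₀ p b : ℝ} (hδ₀ : 0 < δ₀) (hp : 2 ≤ p) :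
    ∃ K : ℝ≥0, LipschitzOnWith K (Gfun δ₀ p) (Icc 0 b) := by
  set K := Real.toNNReal (2 * log b + 3 + (p - 1) * b ^ (p - 2))
  have hH := lipschitzOnWith_Hfun (b := b) hp
  have hsmall : LipschitzOnWith K (Gfun δ₀ p) (Icc 0 (exp (-1))) :=
    LipschitzOnWith.of_dist_le_mul fun x hx y hy => by
      rw [Gfun_eq_zero hδ₀ hp hx.1 hx.2, Gfun_eq_zero hδ₀ hp hy.1 hy.2, dist_self]
      positivity
  have hlarge : LipschitzOnWith K (Gfun δ₀ p) (Icc (exp (-1)) b) :=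
    LipschitzOnWith.of_dist_le_mul fun x hx y hy => by
      have hx₀ : 0 ≤ x := (exp_pos _).le.trans hx.1
      have hy₀ : 0 ≤ y := (exp_pos _).le.trans hy.1
      rw [Gfun_eq_max_Hfun hδ₀ (by linarith) hx₀, Gfun_eq_max_Hfun hδ₀ (by linarith) hy₀,
        Real.dist_eq]
      exact (abs_max_sub_max_le_abs _ _ _).trans (hH.dist_le_mul x hx y hy)
  exact ⟨K, hsmall.Icc_union_Icc hlarge⟩

theorem stmt_18 (δ₀ : ℝ) (hδ₀ : 0 < δ₀) (hδ₀' : δ₀ < Real.exp (-(3/2)))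
    (p M : ℝ) (hp : 2 < p) (hM : 0 < M) :
    ∃ τ : ℝ, 0 < τ ∧ τ < δ₀ ∧
      ∃ L : ℝ, 0 < L ∧
        (∀ t ∈ Set.Icc (0:ℝ) τ, Gfun δ₀ p t = 0) ∧
        (∀ s ∈ Set.Icc (0:ℝ) M, ∀ t ∈ Set.Icc (0:ℝ) M,
          |Gfun δ₀ p s - Gfun δ₀ p t| ≤ L * |s - t|) ∧
        (∀ t ∈ Set.Icc (0:ℝ) M, Gfun δ₀ p t ≤ L * t) := by
  have hδ₀_le : δ₀ ≤ exp (-1) := hδ₀'.le.trans (exp_le_exp.mpr (by norm_num))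
  obtain ⟨K, hK⟩ := lipschitzOnWith_Gfun (b := M) hδ₀ hp.le
  have hK' : LipschitzOnWith (K + 1) (Gfun δ₀ p) (Icc 0 M) := hK.weaken le_self_add
  refine ⟨δ₀ / 2, by positivity, by linarith, K + 1, by positivity, ?_, ?_, ?_⟩
  · exact fun t ht => Gfun_eq_zero hδ₀ hp.le ht.1 (by linarith [ht.2])
  · intro s hs t ht
    simpa only [Real.dist_eq, NNReal.coe_add, NNReal.coe_one] using hK'.dist_le_mul s hs t ht
  · intro t ht
    have h0 : (0 : ℝ) ∈ Icc 0 M := ⟨le_rfl, hM.le⟩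
    simpa [Gfun_eq_zero hδ₀ hp.le le_rfl (exp_pos _).le, Real.dist_eq, abs_of_nonneg ht.1]
      using hK'.le_add_mul ht h0
end
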